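/- Let T > 0, σ ≥ 0, Δ ∈ ℝ, a₁, a₂, c₂ ∈ ℝ, c₁ ≠ 0, and let h : [0,T) × ℝ → ℝ be differentiable. Define H(t,S,q) = q(S − Δ/2 − a₂) − (c₂/2)q² + h(t,q). Then, at any point (t,S,q) with 0 ≤ t < T and c₁q + a₁ > 0, H satisfies the reduced HJB equation ∂ₜH + (σ²/2)∂²_{SS}H + (S − Δ/2 − a₂ − ∂_q H − c₂∂_S H)²/(4(c₁∂_S H + a₁)) = 0 if and only if h satisfies ∂ₜh(t,q) + (∂_q h(t,q))²/(4(c₁q + a₁)) = 0. -/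

import Mathlib

/-
Substituting the ansatz, `∂_S H = q` is constant in `S`, so the diffusion term vanishes and the
denominator becomes `4(c₁q + a₁)`; `∂ₜH = ∂ₜh`; and `∂_q H = S − Δ/2 − a₂ − c₂q + ∂_q h`, so the
numerator collapses to `(∂_q h)²`. The two equations are then literally the same.
-/

/-- The ansatz `H(t,S,q) = q(S − Δ/2 − a₂) − (c₂/2)q² + h(t,q)` for the reduced HJB
equation with linear TPI and quadratic PPI. -/
noncomputable def HansatzQuad (Δ a₂ c₂ : ℝ) (h : ℝ → ℝ → ℝ) (t S q : ℝ) : ℝ :=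
  q * (S - Δ / 2 - a₂) - c₂ / 2 * q ^ 2 + h t q

section HansatzQuad

variable (Δ a₂ c₂ : ℝ) (h : ℝ → ℝ → ℝ)

theorem hansatzQuad_deriv_time (t S q : ℝ) :
    deriv (fun τ => HansatzQuad Δ a₂ c₂ h τ S q) t = deriv (fun τ => h τ q) t :=
  deriv_const_add _

theorem hansatzQuad_deriv_price (t q : ℝ) :
    deriv (fun s => HansatzQuad Δ a₂ c₂ h t s q) = fun _ => q := by
  funext s
  have hH : HasDerivAt (fun s => HansatzQuad Δ a₂ c₂ h t s q) (q * 1) s :=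
    (((((hasDerivAt_id s).sub_const _).sub_const _).const_mul q).sub_const _).add_const _
  rw [hH.deriv, mul_one]

theorem hansatzQuad_hasDerivAt_inventory {t S q d : ℝ}
    (hd : HasDerivAt (fun p => h t p) d q) :
    HasDerivAt (fun p => HansatzQuad Δ a₂ c₂ h t S p) (S - Δ / 2 - a₂ - c₂ * q + d) q := by
  have hpoly := ((hasDerivAt_id q).mul_const (S - Δ / 2 - a₂)).sub
    ((hasDerivAt_pow 2 q).const_mul (c₂ / 2))
  exact (hpoly.add hd).congr_deriv (by norm_num; ring)

end HansatzQuad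

theorem stmt_8_general (T σ Δ a₁ a₂ c₁ c₂ : ℝ)
    (h : ℝ → ℝ → ℝ)
    (hdiff : ∀ t ∈ Set.Ico 0 T, ∀ q : ℝ,
      DifferentiableAt ℝ (fun τ => h τ q) t ∧ DifferentiableAt ℝ (fun p => h t p) q)
    (t S q : ℝ) (ht0 : 0 ≤ t) (htT : t < T) :
    (deriv (fun τ => HansatzQuad Δ a₂ c₂ h τ S q) t
        + σ ^ 2 / 2 * deriv (deriv (fun s => HansatzQuad Δ a₂ c₂ h t s q)) S
        + (S - Δ / 2 - a₂ - deriv (fun p => HansatzQuad Δ a₂ c₂ h t S p) q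
            - c₂ * deriv (fun s => HansatzQuad Δ a₂ c₂ h t s q) S) ^ 2
          / (4 * (c₁ * deriv (fun s => HansatzQuad Δ a₂ c₂ h t s q) S + a₁)) = 0)
      ↔ deriv (fun τ => h τ q) t
          + (deriv (fun p => h t p) q) ^ 2 / (4 * (c₁ * q + a₁)) = 0 := by
  have hq := ((hdiff t ⟨ht0, htT⟩ q).2).hasDerivAt
  rw [hansatzQuad_deriv_time, hansatzQuad_deriv_price,
    (hansatzQuad_hasDerivAt_inventory Δ a₂ c₂ h hq).deriv, deriv_const]
  ring_nf

/-- With linear TPI and quadratic PPI, the ansatz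
`H(t,S,q) = q(S − Δ/2 − a₂) − (c₂/2)q² + h(t,q)` satisfies the reduced HJB equation
`∂ₜH + (σ²/2)∂²_{SS}H + (S − Δ/2 − a₂ − ∂_q H − c₂∂_S H)²/(4(c₁∂_S H + a₁)) = 0`
at a point with `0 ≤ t < T` and `c₁q + a₁ > 0` if and only if `h` satisfies
`∂ₜh + (∂_q h)²/(4(c₁q + a₁)) = 0` there. -/
theorem stmt_8 (T σ Δ a₁ a₂ c₁ c₂ : ℝ) (hT : 0 < T) (hσ : 0 ≤ σ) (hc₁ : c₁ ≠ 0)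
    (h : ℝ → ℝ → ℝ)
    (hdiff : ∀ t ∈ Set.Ico 0 T, ∀ q : ℝ,
      DifferentiableAt ℝ (fun τ => h τ q) t ∧ DifferentiableAt ℝ (fun p => h t p) q)
    (t S q : ℝ) (ht0 : 0 ≤ t) (htT : t < T) (hpos : 0 < c₁ * q + a₁) :
    (deriv (fun τ => HansatzQuad Δ a₂ c₂ h τ S q) t
        + σ ^ 2 / 2 * deriv (deriv (fun s => HansatzQuad Δ a₂ c₂ h t s q)) S
        + (S - Δ / 2 - a₂ - deriv (fun p => HansatzQuad Δ a₂ c₂ h t S p) q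
            - c₂ * deriv (fun s => HansatzQuad Δ a₂ c₂ h t s q) S) ^ 2
          / (4 * (c₁ * deriv (fun s => HansatzQuad Δ a₂ c₂ h t s q) S + a₁)) = 0)
      ↔ deriv (fun τ => h τ q) t
          + (deriv (fun p => h t p) q) ^ 2 / (4 * (c₁ * q + a₁)) = 0 :=
  stmt_8_general T σ Δ a₁ a₂ c₁ c₂ h hdiff t S q ht0 htT
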